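/- arXiv:1710.02205 — 2 statements merged into one kernel-verified Lean document; each statement's English description precedes it below -/
import Mathlib

section
/- For measurable sets U, V ⊆ ℝ^N, a nonnegative measurable symmetric kernel K, and measurable functions u, v : ℝ^N → ℝ, the kinetic energy K(w; U; V) := (1/2)∫_U∫_V |w(x)-w(y)|² K(x,y) dx dy satisfies the submodularity inequality K(min{u,v}; U; V) + K(max{u,v}; U; V) ≤ K(u; U; V) + K(v; U; V). -/
/-!
Submodularity holds pointwise: for reals `a, b, c, d`,
`(a ∧ c - b ∧ d)² + (a ∨ c - b ∨ d)² ≤ (a - b)² + (c - d)²`, since after expanding, this is the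
rearrangement inequality `ab + cd ≤ (a ∧ c)(b ∧ d) + (a ∨ c)(b ∨ d)`. Integrating against the nonnegative
kernel preserves the inequality; the lower Lebesgue integral is superadditive, and it is additive
as soon as one summand is measurable, which is all that is needed to pass the pointwise bound
through the two integrals.
-/

open MeasureTheory ENNReal

/-- The nonlocal kinetic energy `K(w;U;V) = (1/2)∫_U∫_V |w(x)-w(y)|² K(x,y) dx dy`. -/
noncomputable def kineticEnergy {N : ℕ} (K : (Fin N → ℝ) → (Fin N → ℝ) → ℝ≥0∞)
    (w : (Fin N → ℝ) → ℝ) (U V : Set (Fin N → ℝ)) : ℝ≥0∞ :=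
  (1/2) * ∫⁻ x in U, ∫⁻ y in V, ENNReal.ofReal (|w x - w y|^2) * K x y

theorem sq_min_sub_min_add_sq_max_sub_max_le (a b c d : ℝ) :
    (min a c - min b d) ^ 2 + (max a c - max b d) ^ 2 ≤ (a - b) ^ 2 + (c - d) ^ 2 := by
  rcases le_total a c with hac | hca <;> rcases le_total b d with hbd | hdb
  · simp only [min_eq_left, max_eq_right, hac, hbd, le_refl]
  · simp only [min_eq_left, max_eq_right, min_eq_right, max_eq_left, hac, hdb]
    nlinarith [mul_nonneg (sub_nonneg.2 hac) (sub_nonneg.2 hdb)]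
  · simp only [min_eq_left, max_eq_right, min_eq_right, max_eq_left, hca, hbd]
    nlinarith [mul_nonneg (sub_nonneg.2 hca) (sub_nonneg.2 hbd)]
  · simp only [min_eq_right, max_eq_left, hca, hdb]
    linarith

section Lintegral

variable {α β : Type*} [MeasurableSpace α] [MeasurableSpace β] {μ : Measure α} {ν : Measure β}

theorem lintegral_add_le_lintegral_add {f₁ f₂ g₁ g₂ : α → ℝ≥0∞} (hg₁ : AEMeasurable g₁ μ)
    (h : ∀ x, f₁ x + f₂ x ≤ g₁ x + g₂ x) :
    ∫⁻ x, f₁ x ∂μ + ∫⁻ x, f₂ x ∂μ ≤ ∫⁻ x, g₁ x ∂μ + ∫⁻ x, g₂ x ∂μ :=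
  (le_lintegral_add f₁ f₂).trans ((lintegral_mono h).trans_eq (lintegral_add_left' hg₁ g₂))

theorem lintegral_lintegral_add_le_lintegral_lintegral_add [SFinite ν]
    {F₁ F₂ G₁ G₂ : α → β → ℝ≥0∞} (hG₁ : Measurable (Function.uncurry G₁))
    (h : ∀ x y, F₁ x y + F₂ x y ≤ G₁ x y + G₂ x y) :
    ∫⁻ x, ∫⁻ y, F₁ x y ∂ν ∂μ + ∫⁻ x, ∫⁻ y, F₂ x y ∂ν ∂μ
      ≤ ∫⁻ x, ∫⁻ y, G₁ x y ∂ν ∂μ + ∫⁻ x, ∫⁻ y, G₂ x y ∂ν ∂μ :=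
  lintegral_add_le_lintegral_add hG₁.lintegral_prod_right'.aemeasurable fun x =>
    lintegral_add_le_lintegral_add (hG₁.comp measurable_prodMk_left).aemeasurable (h x)

end Lintegral

theorem measurable_ofReal_sq_abs_sub_mul {α : Type*} [MeasurableSpace α] {w : α → ℝ}
    {K : α → α → ℝ≥0∞} (hw : Measurable w) (hK : Measurable (Function.uncurry K)) :
    Measurable (Function.uncurry fun x y => ENNReal.ofReal (|w x - w y| ^ 2) * K x y) :=
  (ENNReal.measurable_ofReal.comp
    (((hw.comp measurable_fst).sub (hw.comp measurable_snd)).abs.pow_const 2)).mul hK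

theorem ofReal_sq_abs_min_max_mul_le (a b c d : ℝ) (k : ℝ≥0∞) :
    ENNReal.ofReal (|min a c - min b d| ^ 2) * k + ENNReal.ofReal (|max a c - max b d| ^ 2) * k
      ≤ ENNReal.ofReal (|a - b| ^ 2) * k + ENNReal.ofReal (|c - d| ^ 2) * k := by
  simp only [sq_abs, ← add_mul]
  rw [← ENNReal.ofReal_add (by positivity) (by positivity),
    ← ENNReal.ofReal_add (by positivity) (by positivity)]
  gcongr ENNReal.ofReal ?_ * _
  exact sq_min_sub_min_add_sq_max_sub_max_le a b c d

theorem stmt0_general {N : ℕ} (U V : Set (Fin N → ℝ))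
    (K : (Fin N → ℝ) → (Fin N → ℝ) → ℝ≥0∞)
    (hK : Measurable (Function.uncurry K))
    (u v : (Fin N → ℝ) → ℝ) (hu : Measurable u) :
    kineticEnergy K (fun x => min (u x) (v x)) U V
      + kineticEnergy K (fun x => max (u x) (v x)) U V
      ≤ kineticEnergy K u U V + kineticEnergy K v U V := by
  simp only [kineticEnergy, ← mul_add]
  gcongr 1 / 2 * ?_
  exact lintegral_lintegral_add_le_lintegral_lintegral_add
    (measurable_ofReal_sq_abs_sub_mul hu hK)
    fun x y => ofReal_sq_abs_min_max_mul_le (u x) (u y) (v x) (v y) (K x y)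

theorem stmt0 {N : ℕ} (hN : 1 ≤ N) (U V : Set (Fin N → ℝ))
    (hU : MeasurableSet U) (hV : MeasurableSet V)
    (K : (Fin N → ℝ) → (Fin N → ℝ) → ℝ≥0∞)
    (hK : Measurable (Function.uncurry K))
    (hKsym : ∀ x y, K x y = K y x)
    (u v : (Fin N → ℝ) → ℝ) (hu : Measurable u) (hv : Measurable v) :
    kineticEnergy K (fun x => min (u x) (v x)) U V
      + kineticEnergy K (fun x => max (u x) (v x)) U V
      ≤ kineticEnergy K u U V + kineticEnergy K v U V :=
  stmt0_general U V K hK u v hu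
end

section
/- Let E ⊆ ℝ^N be a set with the Birkhoff property with respect to a nonzero vector ω ∈ ℝ^N (i.e. τ_k E ⊆ E for all k ∈ ℤ^N with ω·k ≤ 0, and E ⊆ τ_k E for all k ∈ ℤ^N with ω·k ≥ 0). If E contains a ball of radius √N centered at a point x₀, then E contains the half-space {x ∈ ℝ^N : ω·(x - x₀) < 0}. -/
/-!
Round `x - x₀` coordinatewise to an integer vector `k`, downwards where `ωᵢ ≥ 0` and upwards
where `ωᵢ < 0`. Then `ω·k ≤ ω·(x - x₀) < 0`, and every coordinate of `x - k - x₀` has absolute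
value below `1`, so `x - k` lies in the ball of radius `√N` about `x₀`, hence in `E`; the Birkhoff
property for the direction `k` then moves `x - k` to `x` inside `E`.
-/

open Finset

theorem exists_int_mul_le_mul_abs_sub_lt_one (w d : ℝ) : ∃ k : ℤ, w * k ≤ w * d ∧ |d - k| < 1 := by
  rcases le_or_gt 0 w with hw | hw
  · refine ⟨⌊d⌋, mul_le_mul_of_nonneg_left (Int.floor_le d) hw, abs_sub_lt_iff.2 ⟨?_, ?_⟩⟩
    · linarith [Int.lt_floor_add_one d]
    · linarith [Int.floor_le d]
  · refine ⟨⌈d⌉, mul_le_mul_of_nonpos_left (Int.le_ceil d) hw.le, abs_sub_lt_iff.2 ⟨?_, ?_⟩⟩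
    · linarith [Int.le_ceil d]
    · linarith [Int.ceil_lt_add_one d]

theorem exists_int_vector_sum_mul_le_abs_sub_lt_one {ι : Type*} [Fintype ι] (w d : ι → ℝ) :
    ∃ k : ι → ℤ, ∑ i, w i * k i ≤ ∑ i, w i * d i ∧ ∀ i, |d i - k i| < 1 := by
  choose k hk_mul hk_abs using fun i => exists_int_mul_le_mul_abs_sub_lt_one (w i) (d i)
  exact ⟨k, sum_le_sum fun i _ => hk_mul i, hk_abs⟩

theorem EuclideanSpace.dist_lt_sqrt_card_of_forall_abs_sub_lt_one {ι : Type*} [Fintype ι]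
    [Nonempty ι] {x y : EuclideanSpace ℝ ι} (h : ∀ i, |x i - y i| < 1) :
    dist x y < √(Fintype.card ι) := by
  rw [EuclideanSpace.dist_eq]
  refine Real.sqrt_lt_sqrt (sum_nonneg fun i _ => sq_nonneg _) ?_
  calc ∑ i, dist (x i) (y i) ^ 2 < ∑ _i : ι, (1 : ℝ) :=
        sum_lt_sum_of_nonempty univ_nonempty fun i _ => by
          rw [Real.dist_eq]
          exact pow_lt_one₀ (abs_nonneg _) (h i) two_ne_zero
    _ = Fintype.card ι := by simp

theorem stmt3_general {N : ℕ} (E : Set (EuclideanSpace ℝ (Fin N)))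
    (ω : EuclideanSpace ℝ (Fin N))
    (hBirk₁ : ∀ k : Fin N → ℤ, (∑ i, ω i * (k i : ℝ)) ≤ 0 →
      (fun x => x + ((WithLp.equiv 2 (Fin N → ℝ)).symm fun i => (k i : ℝ))) '' E ⊆ E)
    (x₀ : EuclideanSpace ℝ (Fin N))
    (hball : Metric.ball x₀ (Real.sqrt N) ⊆ E) :
    {x : EuclideanSpace ℝ (Fin N) | (∑ i, ω i * (x i - x₀ i)) < 0} ⊆ E := by
  intro x (hx : ∑ i, ω i * (x i - x₀ i) < 0)
  obtain ⟨i₀, -, -⟩ := exists_ne_zero_of_sum_ne_zero hx.ne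
  have : Nonempty (Fin N) := ⟨i₀⟩
  obtain ⟨k, hk_dot, hk_near⟩ :=
    exists_int_vector_sum_mul_le_abs_sub_lt_one (fun i => ω i) (fun i => x i - x₀ i)
  set kv : EuclideanSpace ℝ (Fin N) := (WithLp.equiv 2 (Fin N → ℝ)).symm fun i => (k i : ℝ)
  have h_shift_mem : x - kv ∈ Metric.ball x₀ √N := by
    simpa using EuclideanSpace.dist_lt_sqrt_card_of_forall_abs_sub_lt_one (x := x - kv) (y := x₀)
      fun i => by simpa [kv, sub_right_comm] using hk_near i
  exact hBirk₁ k (hk_dot.trans hx.le) ⟨x - kv, hball h_shift_mem, sub_add_cancel x kv⟩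

theorem stmt3 {N : ℕ} (E : Set (EuclideanSpace ℝ (Fin N)))
    (ω : EuclideanSpace ℝ (Fin N)) (hω : ω ≠ 0)
    (hBirk₁ : ∀ k : Fin N → ℤ, (∑ i, ω i * (k i : ℝ)) ≤ 0 →
      (fun x => x + ((WithLp.equiv 2 (Fin N → ℝ)).symm fun i => (k i : ℝ))) '' E ⊆ E)
    (hBirk₂ : ∀ k : Fin N → ℤ, 0 ≤ (∑ i, ω i * (k i : ℝ)) →
      E ⊆ (fun x => x + ((WithLp.equiv 2 (Fin N → ℝ)).symm fun i => (k i : ℝ))) '' E)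
    (x₀ : EuclideanSpace ℝ (Fin N))
    (hball : Metric.ball x₀ (Real.sqrt N) ⊆ E) :
    {x : EuclideanSpace ℝ (Fin N) | (∑ i, ω i * (x i - x₀ i)) < 0} ⊆ E :=
  stmt3_general E ω hBirk₁ x₀ hball
end
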